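/- Let P be the projector of an ((n,K))_D code Q, S ⊆ {1,…,n}, and define the detection failure rate F^d-fail_S(P) as T^d_S(P)·[1 − F^d_S(P)] where T^d_S = D^{−|S|}B_S'(P) and F^d_S = [KA_S'+B_S']/[(K+1)B_S']. Then F^d-fail_S(P) = K·[B_S'(P) − A_S'(P)] / [D^{|S|}(K+1)], and F^d-fail_S(P) = 0 if and only if every error operator supported in S is detectable by Q. -/

import Mathlib

open Matrix

noncomputable section

/-- Interleave a configuration on the qudits in `S` with one on the complement. -/
def glue {n : ℕ} {α : Type*} (S : Finset (Fin n)) (u : {i // i ∈ S} → α)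
    (v : {i // i ∉ S} → α) : Fin n → α :=
  fun i => if h : i ∈ S then u ⟨i, h⟩ else v ⟨i, h⟩

/-- Partial trace over the qudits indexed by `S` of an operator on `(ℂ^α)^{⊗n}`. -/
def ptr {n : ℕ} {α : Type*} [Fintype α] (S : Finset (Fin n))
    (M : Matrix (Fin n → α) (Fin n → α) ℂ) :
    Matrix ({i // i ∉ S} → α) ({i // i ∉ S} → α) ℂ :=
  fun v w => ∑ u : {i : Fin n // i ∈ S} → α, M (glue S u v) (glue S u w)

/-- Rains enumerator `A_S'(P) = K⁻² tr_S[(tr_{S'}P)²]` (a real quantity). -/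
def Arains {n D : ℕ} (K : ℕ) (S : Finset (Fin n))
    (P : Matrix (Fin n → Fin D) (Fin n → Fin D) ℂ) : ℝ :=
  (1 / (K : ℝ) ^ 2) * ((ptr Sᶜ P * ptr Sᶜ P).trace).re

/-- Rains enumerator `B_S'(P) = K⁻¹ tr_{S'}[(tr_S P)²]` (a real quantity). -/
def Brains {n D : ℕ} (K : ℕ) (S : Finset (Fin n))
    (P : Matrix (Fin n → Fin D) (Fin n → Fin D) ℂ) : ℝ :=
  (1 / (K : ℝ)) * ((ptr S P * ptr S P).trace).re

/-- An operator `E` on `(ℂ^D)^{⊗n}` is supported in `S` if it has the form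
`M ⊗ I` with `M` acting on the qudits in `S` and identity on the complement. -/
def SupportedIn {n D : ℕ} (S : Finset (Fin n))
    (E : Matrix (Fin n → Fin D) (Fin n → Fin D) ℂ) : Prop :=
  ∃ M : Matrix ({i // i ∈ S} → Fin D) ({i // i ∈ S} → Fin D) ℂ,
    ∀ f g : Fin n → Fin D,
      E f g =
        if (fun i : {i // i ∉ S} => f i) = (fun i : {i // i ∉ S} => g i) then
          M (fun i : {i // i ∈ S} => f i) (fun i : {i // i ∈ S} => g i)
        else 0

/-- `E` is detectable by the code with projector `P`: `⟨ψ|E|ψ⟩` is constant on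
unit vectors of the code space. -/
def Detectable {n D : ℕ} (P E : Matrix (Fin n → Fin D) (Fin n → Fin D) ℂ) : Prop :=
  ∀ ψ φ : (Fin n → Fin D) → ℂ, P.mulVec ψ = ψ → P.mulVec φ = φ →
    star ψ ⬝ᵥ ψ = 1 → star φ ⬝ᵥ φ = 1 →
    star ψ ⬝ᵥ E.mulVec ψ = star φ ⬝ᵥ E.mulVec φ

/-- Transmission rate on qudits `S` under error detection, `T^d_S = D^{−|S|}B_S'(P)`. -/
def Tdet {n D : ℕ} (K : ℕ) (S : Finset (Fin n))
    (P : Matrix (Fin n → Fin D) (Fin n → Fin D) ℂ) : ℝ :=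
  Brains K S P / (D : ℝ) ^ S.card

/-- Transmission fidelity on qudits `S` under error detection. -/
def Fdet {n D : ℕ} (K : ℕ) (S : Finset (Fin n))
    (P : Matrix (Fin n → Fin D) (Fin n → Fin D) ℂ) : ℝ :=
  ((K : ℝ) * Arains K S P + Brains K S P) / (((K : ℝ) + 1) * Brains K S P)

/-- Failure rate on qudits `S` under error detection, `T^d_S·(1 − F^d_S)`. -/
def FailDet {n D : ℕ} (K : ℕ) (S : Finset (Fin n))
    (P : Matrix (Fin n → Fin D) (Fin n → Fin D) ℂ) : ℝ :=
  Tdet K S P * (1 - Fdet K S P)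

/-! ### Auxiliary lemmas -/

section Glue

variable {n : ℕ} {α : Type*}

@[simp] lemma glue_resIn (S : Finset (Fin n)) (u : {i // i ∈ S} → α)
    (v : {i // i ∉ S} → α) : (fun i : {i // i ∈ S} => glue S u v i) = u := by
  funext i; simp [glue, i.2]

@[simp] lemma glue_resOut (S : Finset (Fin n)) (u : {i // i ∈ S} → α)
    (v : {i // i ∉ S} → α) : (fun i : {i // i ∉ S} => glue S u v i) = v := by
  funext i; simp [glue, i.2]

lemma glue_res (S : Finset (Fin n)) (f : Fin n → α) :
    glue S (fun i : {i // i ∈ S} => f i) (fun i : {i // i ∉ S} => f i) = f := by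
  funext i; by_cases h : i ∈ S <;> simp [glue, h]

/-- The gluing bijection. -/
def glueEquiv (S : Finset (Fin n)) (α : Type*) :
    (({i // i ∈ S} → α) × ({i // i ∉ S} → α)) ≃ (Fin n → α) where
  toFun p := glue S p.1 p.2
  invFun f := (fun i => f i, fun i => f i)
  left_inv p := by simp
  right_inv f := glue_res S f

lemma sum_glue {β : Type*} [AddCommMonoid β] [Fintype α] (S : Finset (Fin n))
    (F : (Fin n → α) → β) :
    ∑ f : Fin n → α, F f
      = ∑ u : {i // i ∈ S} → α, ∑ v : {i // i ∉ S} → α, F (glue S u v) := by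
  rw [← Equiv.sum_comp (glueEquiv S α) F, Fintype.sum_prod_type]
  rfl

def eIn (S : Finset (Fin n)) : {i // i ∈ S} ≃ {i : Fin n // i ∉ Sᶜ} :=
  Equiv.subtypeEquivRight (by intro x; simp)

def eOut (S : Finset (Fin n)) : {i // i ∉ S} ≃ {i : Fin n // i ∈ Sᶜ} :=
  Equiv.subtypeEquivRight (by intro x; simp)

lemma glue_compl (S : Finset (Fin n)) (u : {i // i ∈ S} → α) (v : {i // i ∉ S} → α) :
    glue Sᶜ (fun i => v ((eOut S).symm i)) (fun i => u ((eIn S).symm i)) = glue S u v := by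
  funext i
  by_cases h : i ∈ S <;> simp [glue, h, eIn, eOut, Equiv.subtypeEquivRight] <;> rfl

end Glue

section Traces

variable {n : ℕ} {α : Type*} [Fintype α] (S : Finset (Fin n))
  (P : Matrix (Fin n → α) (Fin n → α) ℂ)

lemma ptr_compl_apply (u u' : {i // i ∈ S} → α) :
    ptr Sᶜ P (fun i => u ((eIn S).symm i)) (fun i => u' ((eIn S).symm i))
      = ∑ v : {i // i ∉ S} → α, P (glue S u v) (glue S u' v) := by
  rw [ptr]
  refine (Fintype.sum_equiv (Equiv.arrowCongr (eOut S) (Equiv.refl α)) _ _ fun v => ?_).symm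
  rw [← glue_compl S u v, ← glue_compl S u' v]
  rfl

lemma traceA :
    ((ptr Sᶜ P) * (ptr Sᶜ P)).trace
      = ∑ u : {i // i ∈ S} → α, ∑ u' : {i // i ∈ S} → α,
          (∑ v : {i // i ∉ S} → α, P (glue S u v) (glue S u' v))
            * (∑ v : {i // i ∉ S} → α, P (glue S u' v) (glue S u v)) := by
  simp only [Matrix.trace, Matrix.mul_apply, Matrix.diag]
  rw [← Equiv.sum_comp (Equiv.arrowCongr (eIn S) (Equiv.refl α))
      (fun a => ∑ b, ptr Sᶜ P a b * ptr Sᶜ P b a)]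
  refine Finset.sum_congr rfl fun u _ => ?_
  show ∑ b, ptr Sᶜ P _ b * ptr Sᶜ P b _ = _
  rw [← Equiv.sum_comp (Equiv.arrowCongr (eIn S) (Equiv.refl α))
      (fun b => ptr Sᶜ P ((Equiv.arrowCongr (eIn S) (Equiv.refl α)) u) b
        * ptr Sᶜ P b ((Equiv.arrowCongr (eIn S) (Equiv.refl α)) u))]
  refine Finset.sum_congr rfl fun u' _ => ?_
  show ptr Sᶜ P (fun i => u ((eIn S).symm i)) (fun i => u' ((eIn S).symm i))
      * ptr Sᶜ P (fun i => u' ((eIn S).symm i)) (fun i => u ((eIn S).symm i)) = _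
  rw [ptr_compl_apply, ptr_compl_apply]

lemma traceB :
    ((ptr S P) * (ptr S P)).trace
      = ∑ v : {i // i ∉ S} → α, ∑ w : {i // i ∉ S} → α,
          (∑ u : {i // i ∈ S} → α, P (glue S u v) (glue S u w))
            * (∑ u : {i // i ∈ S} → α, P (glue S u w) (glue S u v)) := by
  simp only [Matrix.trace, Matrix.mul_apply, Matrix.diag, ptr]

lemma trace_ptr : (ptr S P).trace = P.trace := by
  have h := sum_glue S (fun f => P f f)
  simp only [Matrix.trace, Matrix.diag, ptr, h]
  exact Finset.sum_comm

lemma ptr_isHermitian (hP : P.IsHermitian) : (ptr S P).IsHermitian := by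
  ext v w
  simp only [Matrix.conjTranspose_apply, ptr, star_sum]
  refine Finset.sum_congr rfl fun u _ => ?_
  have := congrFun (congrFun hP (glue S u v)) (glue S u w)
  simpa [Matrix.conjTranspose_apply] using this

end Traces

section MatCS

variable {ι : Type*} [Fintype ι]

lemma trace_mul_conjTranspose (M : Matrix ι ι ℂ) :
    (M * Mᴴ).trace = ((∑ i, ∑ j, ‖M i j‖ ^ 2 : ℝ) : ℂ) := by
  simp only [Matrix.trace, Matrix.diag, Matrix.mul_apply, Matrix.conjTranspose_apply,
    Complex.ofReal_sum]
  refine Finset.sum_congr rfl fun i _ => Finset.sum_congr rfl fun j _ => ?_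
  rw [show (star (M i j) : ℂ) = (starRingEnd ℂ) (M i j) from rfl, Complex.mul_conj']
  norm_cast

def matVec (X : Matrix ι ι ℂ) : EuclideanSpace ℂ (ι × ι) := WithLp.toLp 2 (fun p => X p.1 p.2)

lemma matVec_inner (X Y : Matrix ι ι ℂ) :
    inner ℂ (matVec X) (matVec Y) = (Xᴴ * Y).trace := by
  simp only [PiLp.inner_apply, RCLike.inner_apply', matVec, PiLp.toLp_apply, Matrix.trace,
    Matrix.mul_apply, Matrix.diag, Matrix.conjTranspose_apply, Fintype.sum_prod_type]
  rw [Finset.sum_comm]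
  simp only [starRingEnd_apply]

lemma matVec_norm_sq (X : Matrix ι ι ℂ) :
    ‖matVec X‖ ^ 2 = ∑ i, ∑ j, ‖X i j‖ ^ 2 := by
  rw [EuclideanSpace.norm_eq, Real.sq_sqrt (by positivity)]
  simp [matVec, Fintype.sum_prod_type]

lemma matVec_eq_zero (X : Matrix ι ι ℂ) : matVec X = 0 ↔ X = 0 := by
  constructor
  · intro h; ext i j
    have := congrArg (fun v : EuclideanSpace ℂ (ι × ι) => v (i, j)) h; simpa [matVec] using this
  · intro h; subst h; ext p; simp [matVec]

lemma cs_matrix (X Y : Matrix ι ι ℂ) :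
    ‖(Xᴴ * Y).trace‖ ^ 2 ≤ (∑ i, ∑ j, ‖X i j‖ ^ 2) * (∑ i, ∑ j, ‖Y i j‖ ^ 2) := by
  rw [← matVec_inner, ← matVec_norm_sq, ← matVec_norm_sq]
  have h := norm_inner_le_norm (𝕜 := ℂ) (matVec X) (matVec Y)
  calc ‖inner ℂ (matVec X) (matVec Y)‖ ^ 2 ≤ (‖matVec X‖ * ‖matVec Y‖) ^ 2 := by
        apply pow_le_pow_left₀ (norm_nonneg _) h
    _ = ‖matVec X‖ ^ 2 * ‖matVec Y‖ ^ 2 := by ring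

lemma cs_matrix_eq (X Y : Matrix ι ι ℂ) (hX : X ≠ 0)
    (h : ‖(Xᴴ * Y).trace‖ ^ 2 = (∑ i, ∑ j, ‖X i j‖ ^ 2) * (∑ i, ∑ j, ‖Y i j‖ ^ 2)) :
    ∃ c : ℂ, Y = c • X := by
  by_cases hY : Y = 0
  · exact ⟨0, by simp [hY]⟩
  rw [← matVec_inner, ← matVec_norm_sq, ← matVec_norm_sq] at h
  have h' : ‖inner (matVec X) (matVec Y) (𝕜 := ℂ)‖ = ‖matVec X‖ * ‖matVec Y‖ := by
    have h2 := congrArg Real.sqrt h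
    rwa [Real.sqrt_sq (norm_nonneg _), show ‖matVec X‖ ^ 2 * ‖matVec Y‖ ^ 2
      = (‖matVec X‖ * ‖matVec Y‖) ^ 2 by ring,
      Real.sqrt_sq (by positivity)] at h2
  obtain ⟨r, -, hr⟩ := (norm_inner_eq_norm_iff
    ((not_iff_not.mpr (matVec_eq_zero X)).mpr hX)
    ((not_iff_not.mpr (matVec_eq_zero Y)).mpr hY)).mp h'
  refine ⟨r, ?_⟩
  ext i j
  have := congrArg (fun v : EuclideanSpace ℂ (ι × ι) => v (i, j)) hr
  simpa [matVec] using this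

end MatCS
section Detect
set_option linter.unusedSectionVars false
variable {ι : Type*} [Fintype ι] [DecidableEq ι]

lemma star_vecMul_self {P : Matrix ι ι ℂ} (hP : P.IsHermitian)
    {ψ : ι → ℂ} (hψ : P.mulVec ψ = ψ) : star ψ ᵥ* P = star ψ := by
  conv_lhs => rw [← hP]
  rw [← Matrix.star_mulVec, hψ]

/-- If `P E P = c • P` then the expectation of `E` is `c` on unit code vectors. -/
lemma expectation_const {P E : Matrix ι ι ℂ} (hP : P.IsHermitian) {c : ℂ}
    (h : P * E * P = c • P) (ψ : ι → ℂ) (hψ : P.mulVec ψ = ψ)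
    (hunit : star ψ ⬝ᵥ ψ = 1) : star ψ ⬝ᵥ E.mulVec ψ = c := by
  have h1 : star ψ ⬝ᵥ (P * E * P).mulVec ψ = star ψ ⬝ᵥ E.mulVec ψ := by
    rw [← Matrix.mulVec_mulVec, ← Matrix.mulVec_mulVec, hψ,
      Matrix.dotProduct_mulVec, star_vecMul_self hP hψ]
  rw [← h1, h]
  simp only [Matrix.smul_mulVec, dotProduct_smul, hψ, hunit, smul_eq_mul, mul_one]

/-- Inner products with the sesquilinear form of `E` against code vectors. -/
lemma scalar_of_detect {P E : Matrix ι ι ℂ} (hP : P.IsHermitian) (hidem : P * P = P)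
    {K : ℕ} (hK : 1 ≤ K) (htr : P.trace = (K : ℂ))
    (hdet : ∀ ψ φ : ι → ℂ, P.mulVec ψ = ψ → P.mulVec φ = φ →
      star ψ ⬝ᵥ ψ = 1 → star φ ⬝ᵥ φ = 1 →
      star ψ ⬝ᵥ E.mulVec ψ = star φ ⬝ᵥ E.mulVec φ) :
    ∃ c : ℂ, P * E * P = c • P := by
  classical
  -- step (a): find a unit code vector ψ₀
  have htrne : P.trace ≠ 0 := by
    rw [htr]; exact_mod_cast Nat.cast_ne_zero.mpr (by omega)
  have hdiag : ∃ f, P f f ≠ 0 := by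
    by_contra hcon
    push_neg at hcon
    exact htrne (by simp [Matrix.trace, Matrix.diag, hcon])
  obtain ⟨f₀, hf₀⟩ := hdiag
  set ψ : ι → ℂ := fun a => P a f₀ with hψdef
  have hcode : ∀ (x : ι → ℂ), P.mulVec x = x → ∀ (d : ℂ), P.mulVec (d • x) = d • x := by
    intro x hx d; rw [Matrix.mulVec_smul, hx]
  have hψcode : P.mulVec ψ = ψ := by
    funext a
    simp only [Matrix.mulVec, dotProduct, hψdef]
    have := congrFun (congrFun hidem a) f₀
    simpa [Matrix.mul_apply] using this
  -- norm of a code vector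
  have hdot : ∀ x : ι → ℂ, star x ⬝ᵥ x = ((∑ a, Complex.normSq (x a) : ℝ) : ℂ) := by
    intro x
    simp only [dotProduct, Pi.star_apply, RCLike.star_def, Complex.ofReal_sum]
    exact Finset.sum_congr rfl fun a _ => by
      rw [Complex.normSq_eq_conj_mul_self]
  -- normalization: any nonzero code vector yields a unit code vector
  have hnorm : ∀ x : ι → ℂ, P.mulVec x = x → x ≠ 0 →
      ∃ y : ι → ℂ, P.mulVec y = y ∧ star y ⬝ᵥ y = 1 ∧
        ∃ r : ℝ, 0 < r ∧ x = (Real.sqrt r : ℂ) • y ∧ star x ⬝ᵥ x = (r : ℂ) := by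
    intro x hx hxne
    set r : ℝ := ∑ a, Complex.normSq (x a) with hrdef
    have hrpos : 0 < r := by
      have : ∃ a, x a ≠ 0 := by
        by_contra hcon; push_neg at hcon; exact hxne (funext fun a => hcon a)
      obtain ⟨a, ha⟩ := this
      have : 0 < Complex.normSq (x a) := by
        simpa [Complex.normSq_pos] using ha
      exact lt_of_lt_of_le this (Finset.single_le_sum
        (fun b _ => Complex.normSq_nonneg (x b)) (Finset.mem_univ a))
    have hsq : ((Real.sqrt r : ℂ))⁻¹ ≠ 0 := by
      simp [Real.sqrt_eq_zero', not_le, hrpos, ne_of_gt hrpos]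
    refine ⟨((Real.sqrt r : ℂ))⁻¹ • x, hcode x hx _, ?_, r, hrpos, ?_, hdot x⟩
    · rw [star_smul, smul_dotProduct, dotProduct_smul, hdot x]
      simp only [smul_eq_mul, RCLike.star_def, map_inv₀, Complex.conj_ofReal]
      rw [← hrdef]
      have : (Real.sqrt r : ℂ) * (Real.sqrt r : ℂ) = (r : ℂ) := by
        rw [← Complex.ofReal_mul, Real.mul_self_sqrt hrpos.le]
      field_simp
      rw [sq, this, div_self (by exact_mod_cast ne_of_gt hrpos)]
    · funext a
      simp only [Pi.smul_apply, smul_eq_mul, ← mul_assoc]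
      rw [mul_inv_cancel₀ (by
        simpa using (Real.sqrt_ne_zero hrpos.le).mpr (ne_of_gt hrpos)), one_mul]
  obtain ⟨ψ₀, hψ₀code, hψ₀unit, -⟩ := hnorm ψ hψcode (by
    intro hcon; exact hf₀ (by simpa [hψdef] using congrFun hcon f₀))
  set c : ℂ := star ψ₀ ⬝ᵥ E.mulVec ψ₀ with hcdef
  refine ⟨c, ?_⟩
  -- step (c): quadratic form equals c ⬝ norm² on all code vectors
  have hq : ∀ x : ι → ℂ, P.mulVec x = x →
      star x ⬝ᵥ E.mulVec x = c * (star x ⬝ᵥ x) := by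
    intro x hx
    by_cases hxz : x = 0
    · subst hxz; simp
    obtain ⟨y, hycode, hyunit, r, hrpos, hxy, hxdot⟩ := hnorm x hx hxz
    have hy : star y ⬝ᵥ E.mulVec y = c := hdet y ψ₀ hycode hψ₀code hyunit hψ₀unit
    rw [hxdot, hxy]
    rw [star_smul, smul_dotProduct, Matrix.mulVec_smul, dotProduct_smul, hy]
    simp only [smul_eq_mul, RCLike.star_def, Complex.conj_ofReal]
    have hss : ((Real.sqrt r : ℝ) : ℂ) * ((Real.sqrt r : ℝ) : ℂ) = (r : ℂ) := by
      rw [← Complex.ofReal_mul, Real.mul_self_sqrt hrpos.le]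
    linear_combination c * hss
  -- step (d): polarization
  have hs : ∀ x z : ι → ℂ, P.mulVec x = x → P.mulVec z = z →
      star x ⬝ᵥ E.mulVec z = c * (star x ⬝ᵥ z) := by
    intro x z hx hz
    have h1 := hq (x + z) (by rw [Matrix.mulVec_add, hx, hz])
    have h2 := hq (x + Complex.I • z) (by rw [Matrix.mulVec_add, hcode z hz, hx])
    have h3 := hq x hx
    have h4 := hq z hz
    simp only [star_add, star_smul, Matrix.mulVec_add, Matrix.mulVec_smul,
      add_dotProduct, dotProduct_add, smul_dotProduct, dotProduct_smul,
      smul_eq_mul, RCLike.star_def, Complex.conj_I] at h1 h2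
    have hI := Complex.I_ne_zero
    linear_combination (1/2 : ℂ) * h1 - Complex.I/2 * h2
      + ((Complex.I - 1)/2) * h3 + ((Complex.I - 1)/2) * h4
      + ((star x ⬝ᵥ E.mulVec z) / 2 + c * (star z ⬝ᵥ x) / 2 - c * (star x ⬝ᵥ z) / 2
        + Complex.I * c * (star z ⬝ᵥ z) / 2 - Complex.I * (star z ⬝ᵥ E.mulVec z) / 2
        - (star z ⬝ᵥ E.mulVec x) / 2) * Complex.I_sq
  -- step (e): conclude the operator identity
  have hPPs : ∀ x : ι, P.mulVec (P.mulVec (Pi.single x 1)) = P.mulVec (Pi.single x 1) := by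
    intro x; rw [Matrix.mulVec_mulVec, hidem]
  ext a b
  have h := hs (P.mulVec (Pi.single a 1)) (P.mulVec (Pi.single b 1)) (hPPs a) (hPPs b)
  have hstar : star (P.mulVec (Pi.single a 1)) = fun j => P a j := by
    funext j
    have hentry : star (P j a) = P a j := by
      have h2 := congrFun (congrFun hP a) j
      simpa [Matrix.conjTranspose_apply] using h2
    simp [Matrix.mulVec_single, hentry]
  rw [hstar, Matrix.mulVec_single, Matrix.dotProduct_mulVec] at h
  have hL : ((fun j => P a j) ᵥ* E) ⬝ᵥ (fun i => P i b * 1) = (P * E * P) a b := by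
    simp only [Matrix.vecMul, Matrix.mul_apply, dotProduct, mul_one]
  have hR : (fun j => P a j) ⬝ᵥ (fun i => P i b * 1) = P a b := by
    have h2 := congrFun (congrFun hidem a) b
    simp only [Matrix.mul_apply] at h2
    simpa [dotProduct] using h2
  have hcol : (MulOpposite.op (1:ℂ) • P.col b) = fun i => P i b * 1 := by funext i; simp
  rw [hcol, hL, hR] at h
  simpa using h

end Detect

section Eunit

variable {n D : ℕ}

/-- The matrix-unit error operator `|u⟩⟨u'| ⊗ I`. -/
def Eunit (S : Finset (Fin n)) (u u' : {i // i ∈ S} → Fin D) :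
    Matrix (Fin n → Fin D) (Fin n → Fin D) ℂ :=
  fun f g => if (fun i : {i // i ∈ S} => f i) = u ∧ (fun i : {i // i ∈ S} => g i) = u'
      ∧ (fun i : {i // i ∉ S} => f i) = (fun i : {i // i ∉ S} => g i) then 1 else 0

variable (S : Finset (Fin n)) (P : Matrix (Fin n → Fin D) (Fin n → Fin D) ℂ)

lemma trace_P_Eunit (u u' : {i // i ∈ S} → Fin D) :
    (P * Eunit S u u').trace
      = ∑ v : {i // i ∉ S} → Fin D, P (glue S u' v) (glue S u v) := by
  simp only [Matrix.trace, Matrix.mul_apply, Matrix.diag, Eunit]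
  simp only [sum_glue S]
  simp [mul_ite, ite_and]

lemma trace_PEPE (u u' : {i // i ∈ S} → Fin D) :
    (P * Eunit S u u' * P * Eunit S u' u).trace
      = ∑ v : {i // i ∉ S} → Fin D, ∑ w : {i // i ∉ S} → Fin D,
          P (glue S u v) (glue S u w) * P (glue S u' w) (glue S u' v) := by
  simp only [Matrix.trace, Matrix.mul_apply, Matrix.diag, Eunit]
  simp only [sum_glue S]
  simp [mul_ite, ite_and, Finset.sum_mul, Finset.mul_sum]

lemma Eunit_conjTranspose (u u' : {i // i ∈ S} → Fin D) :
    (Eunit S u u')ᴴ = Eunit S u' u := by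
  ext f g
  simp only [Matrix.conjTranspose_apply, Eunit]
  have hst : ∀ (c : Prop) [Decidable c], star (if c then (1:ℂ) else 0) = if c then 1 else 0 := by
    intro c _; split <;> simp
  rw [hst]
  exact if_congr ⟨fun ⟨a, b, c⟩ => ⟨b, a, c.symm⟩, fun ⟨a, b, c⟩ => ⟨b, a, c.symm⟩⟩ rfl rfl

lemma supportedIn_Eunit (u u' : {i // i ∈ S} → Fin D) :
    SupportedIn S (Eunit S u u') := by
  refine ⟨fun a b => if a = u ∧ b = u' then 1 else 0, fun f g => ?_⟩
  simp only [Eunit]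
  by_cases h1 : (fun i : {i // i ∈ S} => f i) = u <;>
    by_cases h2 : (fun i : {i // i ∈ S} => g i) = u' <;>
      by_cases h3 : (fun i : {i // i ∉ S} => f i) = (fun i : {i // i ∉ S} => g i) <;>
        simp [h1, h2, h3]

lemma supported_decomp (E : Matrix (Fin n → Fin D) (Fin n → Fin D) ℂ)
    (M : Matrix ({i // i ∈ S} → Fin D) ({i // i ∈ S} → Fin D) ℂ)
    (hM : ∀ f g : Fin n → Fin D,
      E f g =
        if (fun i : {i // i ∉ S} => f i) = (fun i : {i // i ∉ S} => g i) then
          M (fun i : {i // i ∈ S} => f i) (fun i : {i // i ∈ S} => g i)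
        else 0) :
    E = ∑ u : {i // i ∈ S} → Fin D, ∑ u' : {i // i ∈ S} → Fin D,
          M u u' • Eunit S u u' := by
  ext f g
  rw [hM f g, show (∑ u : {i // i ∈ S} → Fin D, ∑ u' : {i // i ∈ S} → Fin D,
      M u u' • Eunit S u u') = (∑ u' : {i // i ∈ S} → Fin D, ∑ u : {i // i ∈ S} → Fin D,
      M u u' • Eunit S u u') from Finset.sum_comm]
  simp only [Matrix.sum_apply, Matrix.smul_apply, Eunit, smul_eq_mul, mul_ite, mul_one,
    mul_zero, ite_and, Finset.sum_ite_eq, Finset.mem_univ, if_true]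

/-- Four-fold sum exchange. -/
lemma sum_comm4 {β γ M : Type*} [Fintype β] [Fintype γ] [AddCommMonoid M]
    (f : β → β → γ → γ → M) :
    ∑ v : γ, ∑ w : γ, ∑ u : β, ∑ u' : β, f u u' v w
      = ∑ u : β, ∑ u' : β, ∑ v : γ, ∑ w : γ, f u u' v w := by
  have h1 : ∑ v : γ, ∑ w : γ, ∑ u : β, ∑ u' : β, f u u' v w
      = ∑ v : γ, ∑ u : β, ∑ w : γ, ∑ u' : β, f u u' v w :=
    Finset.sum_congr rfl fun v _ => Finset.sum_comm
  have h2 : ∑ v : γ, ∑ u : β, ∑ w : γ, ∑ u' : β, f u u' v w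
      = ∑ u : β, ∑ v : γ, ∑ w : γ, ∑ u' : β, f u u' v w := Finset.sum_comm
  have h3 : ∑ u : β, ∑ v : γ, ∑ w : γ, ∑ u' : β, f u u' v w
      = ∑ u : β, ∑ v : γ, ∑ u' : β, ∑ w : γ, f u u' v w :=
    Finset.sum_congr rfl fun u _ => Finset.sum_congr rfl fun v _ => Finset.sum_comm
  have h4 : ∑ u : β, ∑ v : γ, ∑ u' : β, ∑ w : γ, f u u' v w
      = ∑ u : β, ∑ u' : β, ∑ v : γ, ∑ w : γ, f u u' v w :=
    Finset.sum_congr rfl fun u _ => Finset.sum_comm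
  rw [h1, h2, h3, h4]

end Eunit
set_option maxHeartbeats 2000000 in
/-- The detection failure rate equals
`K·[B_S'(P) − A_S'(P)] / [D^{|S|}(K+1)]`, and it vanishes iff every error operator
supported in `S` is detectable by the code. -/
theorem stmt_15 (n D K : ℕ) (hD : 2 ≤ D) (hK : 1 ≤ K)
    (P : Matrix (Fin n → Fin D) (Fin n → Fin D) ℂ)
    (hPherm : P.IsHermitian) (hPidem : P * P = P) (hPtr : P.trace = (K : ℂ))
    (S : Finset (Fin n)) :
    FailDet K S P =
        (K : ℝ) * (Brains K S P - Arains K S P) / ((D : ℝ) ^ S.card * ((K : ℝ) + 1)) ∧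
      (FailDet K S P = 0 ↔
        ∀ E : Matrix (Fin n → Fin D) (Fin n → Fin D) ℂ,
          SupportedIn S E → Detectable P E) := by
  classical
  have hKr : (0:ℝ) < (K:ℝ) := by exact_mod_cast Nat.lt_of_lt_of_le Nat.zero_lt_one hK
  have hKne : (K:ℝ) ≠ 0 := ne_of_gt hKr
  have hKCne : (K:ℂ) ≠ 0 := by
    exact_mod_cast (Nat.cast_ne_zero (R := ℂ)).mpr (by omega)
  have hDr : (0:ℝ) < (D:ℝ) := by exact_mod_cast Nat.lt_of_lt_of_le Nat.zero_lt_two hD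
  have hDs : (0:ℝ) < (D:ℝ) ^ S.card := by positivity
  have hK1 : (0:ℝ) < (K:ℝ) + 1 := by linarith
  have hPne : P ≠ 0 := fun hc => hKCne (by rw [← hPtr, hc, Matrix.trace_zero])
  have hPHeq : Pᴴ = P := hPherm
  have hPleft : ∀ X : Matrix (Fin n → Fin D) (Fin n → Fin D) ℂ,
      P * (P * X) = P * X := fun X => by rw [← Matrix.mul_assoc, hPidem]
  have hPfro : (∑ i, ∑ j, ‖P i j‖ ^ 2 : ℝ) = (K:ℝ) := by
    have h1 := trace_mul_conjTranspose P
    rw [hPHeq, hPidem, hPtr] at h1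
    exact_mod_cast h1.symm
  have hmc : ∀ z : ℂ, z * star z = ((‖z‖ ^ 2 : ℝ) : ℂ) := fun z => by
    rw [show (star z) = (starRingEnd ℂ) z from rfl, Complex.mul_conj']
    norm_cast
  set T : ({i // i ∈ S} → Fin D) → ({i // i ∈ S} → Fin D) → ℂ :=
    fun u u' => ∑ v : {i // i ∉ S} → Fin D, P (glue S u v) (glue S u' v) with hTdef
  set gq : ({i // i ∈ S} → Fin D) → ({i // i ∈ S} → Fin D) → ℝ := fun u u' =>
    (K:ℝ) * (∑ i, ∑ j, ‖(P * Eunit S u u' * P) i j‖ ^ 2) - ‖T u' u‖ ^ 2 with hgdef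
  have hTau : ∀ u u', (P * Eunit S u u' * P).trace = T u' u := by
    intro u u'
    rw [Matrix.trace_mul_comm (P * Eunit S u u') P, ← Matrix.mul_assoc, hPidem,
      trace_P_Eunit]
  have hPF : ∀ u u', Pᴴ * (P * Eunit S u u' * P) = P * Eunit S u u' * P := by
    intro u u'
    rw [hPHeq, ← Matrix.mul_assoc, ← Matrix.mul_assoc, hPidem]
  have hFadj : ∀ u u', (P * Eunit S u u' * P)ᴴ = P * Eunit S u' u * P := by
    intro u u'
    rw [Matrix.conjTranspose_mul, Matrix.conjTranspose_mul, Eunit_conjTranspose, hPHeq,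
      ← Matrix.mul_assoc]
  have hFF : ∀ u u', ((P * Eunit S u u' * P) * (P * Eunit S u u' * P)ᴴ).trace
      = (P * Eunit S u u' * P * Eunit S u' u).trace := by
    intro u u'
    rw [hFadj]
    have h5 : (P * Eunit S u u' * P) * (P * Eunit S u' u * P)
        = (P * Eunit S u u' * P * Eunit S u' u) * P := by
      simp only [Matrix.mul_assoc]
      rw [hPleft]
    rw [h5, Matrix.trace_mul_comm]
    simp only [← Matrix.mul_assoc]
    rw [hPidem]
  have hFfro : ∀ u u', ((∑ i, ∑ j, ‖(P * Eunit S u u' * P) i j‖ ^ 2 : ℝ) : ℂ)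
      = (P * Eunit S u u' * P * Eunit S u' u).trace := by
    intro u u'; rw [← hFF, trace_mul_conjTranspose]
  have hTstar : ∀ u u', T u u' = star (T u' u) := by
    intro u u'
    rw [hTdef]
    simp only [star_sum]
    refine Finset.sum_congr rfl fun v _ => ?_
    have h2 := congrFun (congrFun hPHeq (glue S u v)) (glue S u' v)
    simpa [Matrix.conjTranspose_apply] using h2.symm
  -- A enumerator as a sum of squares
  have ha : ((ptr Sᶜ P * ptr Sᶜ P).trace)
      = ((∑ u, ∑ u', ‖T u' u‖ ^ 2 : ℝ) : ℂ) := by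
    rw [traceA, Complex.ofReal_sum]
    refine Finset.sum_congr rfl fun u _ => ?_
    rw [Complex.ofReal_sum]
    refine Finset.sum_congr rfl fun u' _ => ?_
    rw [show (∑ v : {i // i ∉ S} → Fin D, P (glue S u v) (glue S u' v)) = T u u' from rfl,
      show (∑ v : {i // i ∉ S} → Fin D, P (glue S u' v) (glue S u v)) = T u' u from rfl,
      hTstar u u', mul_comm, hmc]
  -- B enumerator as a sum of Frobenius norms
  have hb : ((ptr S P * ptr S P).trace)
      = ((∑ u : {i // i ∈ S} → Fin D, ∑ u' : {i // i ∈ S} → Fin D,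
          (∑ i, ∑ j, ‖(P * Eunit S u u' * P) i j‖ ^ 2) : ℝ) : ℂ) := by
    rw [traceB]
    have h6 : ∀ v w, (∑ u, P (glue S u v) (glue S u w))
        * (∑ u', P (glue S u' w) (glue S u' v))
        = ∑ u, ∑ u', P (glue S u v) (glue S u w) * P (glue S u' w) (glue S u' v) :=
      fun v w => Finset.sum_mul_sum _ _ _ _
    simp only [h6]
    rw [sum_comm4 (fun u u' v w => P (glue S u v) (glue S u w)
      * P (glue S u' w) (glue S u' v))]
    rw [Complex.ofReal_sum]
    refine Finset.sum_congr rfl fun u _ => ?_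
    rw [Complex.ofReal_sum]
    refine Finset.sum_congr rfl fun u' _ => ?_
    rw [hFfro u u', trace_PEPE]
  have hAr : Arains K S P = (1 / (K:ℝ)^2) * ∑ u, ∑ u', ‖T u' u‖ ^ 2 := by
    unfold Arains
    rw [ha, Complex.ofReal_re]
  have hBr : Brains K S P
      = (1 / (K:ℝ)) * ∑ u : {i // i ∈ S} → Fin D, ∑ u' : {i // i ∈ S} → Fin D,
          (∑ i, ∑ j, ‖(P * Eunit S u u' * P) i j‖ ^ 2) := by
    unfold Brains
    rw [hb, Complex.ofReal_re]
  have hsum_g : ∑ u, ∑ u', gq u u'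
      = (K:ℝ) * (∑ u : {i // i ∈ S} → Fin D, ∑ u' : {i // i ∈ S} → Fin D,
          (∑ i, ∑ j, ‖(P * Eunit S u u' * P) i j‖ ^ 2))
        - ∑ u, ∑ u', ‖T u' u‖ ^ 2 := by
    rw [hgdef]
    simp only [Finset.sum_sub_distrib, Finset.mul_sum]
  have hBA : Brains K S P - Arains K S P = (1 / (K:ℝ)^2) * ∑ u, ∑ u', gq u u' := by
    rw [hAr, hBr, hsum_g]
    field_simp
  have hg_nonneg : ∀ u u', 0 ≤ gq u u' := by
    intro u u'
    have hcs := cs_matrix P (P * Eunit S u u' * P)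
    rw [hPF u u', hTau u u', hPfro] at hcs
    rw [hgdef]
    simp only [sub_nonneg]
    exact hcs
  have hscalar_of_g : ∀ u u', gq u u' = 0 → ∃ c : ℂ, P * Eunit S u u' * P = c • P := by
    intro u u' h0
    apply cs_matrix_eq P (P * Eunit S u u' * P) hPne
    rw [hPF u u', hTau u u', hPfro]
    rw [hgdef] at h0
    simp only at h0
    linarith
  have hg_of_scalar : ∀ u u' (c : ℂ), P * Eunit S u u' * P = c • P → gq u u' = 0 := by
    intro u u' c hc
    have h1 : T u' u = c * (K:ℂ) := by
      rw [← hTau u u', hc, Matrix.trace_smul, hPtr, smul_eq_mul]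
    have h2 : (∑ i, ∑ j, ‖(P * Eunit S u u' * P) i j‖ ^ 2 : ℝ) = ‖c‖^2 * (K:ℝ) := by
      rw [hc]
      simp only [Matrix.smul_apply, smul_eq_mul, norm_mul, mul_pow, ← Finset.mul_sum]
      rw [hPfro]
    rw [hgdef]
    simp only
    rw [h1, h2, norm_mul]
    simp only [Complex.norm_natCast]
    ring
  -- positivity of Brains
  have hBpos : 0 < Brains K S P := by
    have hHerm : (ptr S P)ᴴ = ptr S P := ptr_isHermitian S P hPherm
    have htr2 : (ptr S P * ptr S P).trace
        = ((∑ v, ∑ w, ‖ptr S P v w‖ ^ 2 : ℝ) : ℂ) := by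
      conv_lhs => rw [show ptr S P * ptr S P = ptr S P * (ptr S P)ᴴ from by rw [hHerm]]
      exact trace_mul_conjTranspose _
    unfold Brains
    rw [htr2, Complex.ofReal_re]
    apply mul_pos (by positivity)
    have hne : ptr S P ≠ 0 := by
      intro hc
      apply hKCne
      rw [← hPtr, ← trace_ptr S P, hc, Matrix.trace_zero]
    obtain ⟨v, w, hvw⟩ : ∃ v w, ptr S P v w ≠ 0 := by
      by_contra hc; push_neg at hc
      exact hne (by ext v w; simpa using hc v w)
    have hpos1 : (0:ℝ) < ‖ptr S P v w‖ ^ 2 := pow_pos (norm_pos_iff.mpr hvw) 2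
    have hle1 : ‖ptr S P v w‖ ^ 2
        ≤ ∑ w' : {i // i ∉ S} → Fin D, ‖ptr S P v w'‖ ^ 2 :=
      Finset.single_le_sum (f := fun w' => ‖ptr S P v w'‖ ^ 2)
        (fun w' _ => by positivity) (Finset.mem_univ w)
    have hle2 : (∑ w' : {i // i ∉ S} → Fin D, ‖ptr S P v w'‖ ^ 2)
        ≤ ∑ v' : {i // i ∉ S} → Fin D, ∑ w' : {i // i ∉ S} → Fin D, ‖ptr S P v' w'‖ ^ 2 :=
      Finset.single_le_sum
        (f := fun v' => ∑ w' : {i // i ∉ S} → Fin D, ‖ptr S P v' w'‖ ^ 2)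
        (fun v' _ => Finset.sum_nonneg fun w' _ => by positivity) (Finset.mem_univ v)
    linarith
  have hBne : Brains K S P ≠ 0 := ne_of_gt hBpos
  have hpart1 : FailDet K S P
      = (K : ℝ) * (Brains K S P - Arains K S P) / ((D : ℝ) ^ S.card * ((K : ℝ) + 1)) := by
    unfold FailDet Tdet Fdet
    field_simp
    ring
  refine ⟨hpart1, ?_⟩
  rw [hpart1]
  constructor
  · intro h0 E hE
    have hnum : (K:ℝ) * (Brains K S P - Arains K S P) = 0 := by
      rcases div_eq_zero_iff.mp h0 with h | h
      · exact h
      · exact absurd h (ne_of_gt (mul_pos hDs hK1))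
    have hBA0 : Brains K S P - Arains K S P = 0 :=
      (mul_eq_zero.mp hnum).resolve_left hKne
    have hsum0 : ∑ u, ∑ u', gq u u' = 0 := by
      rw [hBA] at hBA0
      rcases mul_eq_zero.mp hBA0 with h | h
      · exact absurd h (by positivity)
      · exact h
    have hg0 : ∀ u u', gq u u' = 0 := by
      intro u u'
      have houter := (Finset.sum_eq_zero_iff_of_nonneg
        (fun u _ => Finset.sum_nonneg fun u' _ => hg_nonneg u u')).mp hsum0
      have hinner := (Finset.sum_eq_zero_iff_of_nonneg
        (fun u' _ => hg_nonneg u u')).mp (houter u (Finset.mem_univ u))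
      exact hinner u' (Finset.mem_univ u')
    obtain ⟨M, hM⟩ := hE
    choose c hc using fun u u' => hscalar_of_g u u' (hg0 u u')
    have hPEP : P * E * P = (∑ u, ∑ u', M u u' * c u u') • P := by
      rw [supported_decomp S E M hM]
      simp only [Matrix.mul_sum, Matrix.sum_mul, Matrix.mul_smul, Matrix.smul_mul]
      simp only [hc, smul_smul, ← Finset.sum_smul]
    intro ψ φ h1 h2 h3 h4
    rw [expectation_const hPherm hPEP ψ h1 h3, expectation_const hPherm hPEP φ h2 h4]
  · intro hdet
    have hg0 : ∀ u u', gq u u' = 0 := by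
      intro u u'
      obtain ⟨cc, hcc⟩ := scalar_of_detect hPherm hPidem hK hPtr
        (hdet (Eunit S u u') (supportedIn_Eunit S u u'))
      exact hg_of_scalar u u' cc hcc
    have hz : Brains K S P - Arains K S P = 0 := by
      rw [hBA]
      simp [hg0]
    rw [hz]
    simp

end
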